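/- arXiv:2411.01346 — 3 statements merged into one kernel-verified Lean document; each statement's English description precedes it below -/
import Mathlib

section
/- Assume that Ω ⊆ ℝⁿ is a Lipschitz manifold of dimension d around z̄ ∈ Ω. If the paratingent cone T^P_Ω(z̄) is a linear subspace, then dim T^P_Ω(z̄) = d. Further, if the limiting normal cone N_Ω(z̄) is a linear subspace, then dim N_Ω(z̄) = n − d. -/
open Filter Topology Metric Set
open scoped RealInnerProductSpace NNReal ENNReal

noncomputable section

/-- Euclidean space `ℝⁿ`. -/
abbrev Euc (n : ℕ) : Type := EuclideanSpace ℝ (Fin n)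

section NormedDefs

variable {X Y : Type*} [NormedAddCommGroup X] [NormedSpace ℝ X]
  [NormedAddCommGroup Y] [NormedSpace ℝ Y]

/-- The (Bouligand) tangent cone to `Ω` at `z`. -/
def tanCone (Ω : Set X) (z : X) : Set X :=
  {w | ∃ (t : ℕ → ℝ) (wk : ℕ → X), (∀ k, 0 < t k) ∧ Tendsto t atTop (𝓝 0) ∧
      Tendsto wk atTop (𝓝 w) ∧ ∀ k, z + t k • wk k ∈ Ω}

/-- The regular (Clarke) tangent cone to `Ω` at `z`. -/
def clarkeCone (Ω : Set X) (z : X) : Set X :=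
  {w | ∀ (zk : ℕ → X) (t : ℕ → ℝ), (∀ k, zk k ∈ Ω) → Tendsto zk atTop (𝓝 z) →
      (∀ k, 0 < t k) → Tendsto t atTop (𝓝 0) →
      ∃ wk : ℕ → X, Tendsto wk atTop (𝓝 w) ∧ ∀ k, zk k + t k • wk k ∈ Ω}

/-- The paratingent cone to `Ω` at `z`. -/
def paraCone (Ω : Set X) (z : X) : Set X :=
  {w | ∃ (zk : ℕ → X) (t : ℕ → ℝ) (wk : ℕ → X), (∀ k, zk k ∈ Ω) ∧
      Tendsto zk atTop (𝓝 z) ∧ (∀ k, 0 < t k) ∧ Tendsto t atTop (𝓝 0) ∧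
      Tendsto wk atTop (𝓝 w) ∧ ∀ k, zk k + t k • wk k ∈ Ω}

/-- `Ω` is strictly smooth at `z` if the Clarke tangent cone and the paratingent
cone coincide there. -/
def StrictlySmoothAt (Ω : Set X) (z : X) : Prop := clarkeCone Ω z = paraCone Ω z

/-- `Ω` is geometrically derivable at `z`. -/
def GeomDerivableAt (Ω : Set X) (z : X) : Prop :=
  ∀ w ∈ tanCone Ω z, ∀ t : ℕ → ℝ, (∀ k, 0 < t k) → Tendsto t atTop (𝓝 0) →
    ∃ wk : ℕ → X, Tendsto wk atTop (𝓝 w) ∧ ∀ k, z + t k • wk k ∈ Ω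

/-- `Ω` is locally closed at `z`. -/
def LocallyClosedAt (Ω : Set X) (z : X) : Prop :=
  ∃ V : Set X, V ∈ 𝓝 z ∧ IsClosed V ∧ IsClosed (Ω ∩ V)

/-- The set `s` is a linear subspace. -/
def IsLinearSubspace (s : Set X) : Prop := ∃ S : Submodule ℝ X, (S : Set X) = s

/-- The set `s` is a linear subspace of dimension `d`. -/
def HasDim (s : Set X) (d : ℕ) : Prop :=
  ∃ S : Submodule ℝ X, (S : Set X) = s ∧ Module.finrank ℝ S = d

/-- The graph of a set-valued mapping. -/
def gphOf (Fm : X → Set Y) : Set (X × Y) := {p | p.2 ∈ Fm p.1}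

/-- The graph of a single-valued mapping defined on `U`. -/
def gphOn (f : X → Y) (U : Set X) : Set (X × Y) := {p | p.1 ∈ U ∧ p.2 = f p.1}

/-- `f` (defined on `U`) is strictly continuous (locally Lipschitz) at `xb`. -/
def StrictlyContinuousAt' (f : X → Y) (U : Set X) (xb : X) : Prop :=
  ∃ U' ∈ 𝓝 xb, U' ⊆ U ∧ ∃ κ : ℝ, 0 ≤ κ ∧
    ∀ x ∈ U', ∀ x' ∈ U', ‖f x - f x'‖ ≤ κ * ‖x - x'‖

/-- `f` (defined on `U`) is calm at `xb`. -/
def CalmAt' (f : X → Y) (U : Set X) (xb : X) : Prop :=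
  ∃ U' ∈ 𝓝 xb, U' ⊆ U ∧ ∃ κ : ℝ, 0 ≤ κ ∧ ∀ x ∈ U', ‖f x - f xb‖ ≤ κ * ‖x - xb‖

/-- `f` (defined on `U`) is strictly differentiable at `xb`. -/
def StrictDiffOnAt (f : X → Y) (U : Set X) (xb : X) : Prop :=
  ∃ A : X →L[ℝ] Y, ∀ ε : ℝ, 0 < ε → ∃ δ > 0, ∀ x ∈ U, ∀ x' ∈ U,
    ‖x - xb‖ < δ → ‖x' - xb‖ < δ → ‖f x' - f x - A (x' - x)‖ ≤ ε * ‖x' - x‖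

/-- `f` (defined on `U`) is Fréchet differentiable at `xb`. -/
def FrechetDiffOnAt (f : X → Y) (U : Set X) (xb : X) : Prop :=
  ∃ A : X →L[ℝ] Y, ∀ ε : ℝ, 0 < ε → ∃ δ > 0, ∀ x ∈ U,
    ‖x - xb‖ < δ → ‖f x - f xb - A (x - xb)‖ ≤ ε * ‖x - xb‖

/-- The B-Jacobian (Bouligand limiting Jacobian) of `f` at `xb`. -/
def BJacobian (f : X → Y) (U : Set X) (xb : X) : Set (X →L[ℝ] Y) :=
  {A | ∃ (xk : ℕ → X) (Ak : ℕ → X →L[ℝ] Y),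
      (∀ k, xk k ∈ U ∧ HasFDerivAt f (Ak k) (xk k)) ∧
      Tendsto xk atTop (𝓝 xb) ∧ Tendsto Ak atTop (𝓝 A)}

/-- `Ω ⊆ X` is a Lipschitz manifold of dimension `d` (and codimension `c`) around `z`:
up to a `C¹` change of coordinates `Φ`, `Ω` locally coincides with the graph of a
Lipschitz mapping `f : U → ℝᶜ`, `U ⊆ ℝᵈ` open. -/
def IsLipschitzManifoldAt (Ω : Set X) (d c : ℕ) (z : X) : Prop :=
  ∃ (W : Set X) (Φ : X → Euc d × Euc c) (Ψ : Euc d × Euc c → X)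
    (U : Set (Euc d)) (f : Euc d → Euc c) (K : ℝ≥0),
    IsOpen W ∧ z ∈ W ∧ IsOpen (Φ '' W) ∧
    ContDiffOn ℝ 1 Φ W ∧ ContDiffOn ℝ 1 Ψ (Φ '' W) ∧
    (∀ x ∈ W, Ψ (Φ x) = x) ∧ (∀ y ∈ Φ '' W, Φ (Ψ y) = y) ∧
    IsOpen U ∧ LipschitzOnWith K f U ∧
    Φ '' (Ω ∩ W) = {p | p.1 ∈ U ∧ p.2 = f p.1}

/-- As `IsLipschitzManifoldAt`, with the Lipschitz mapping `f` moreover strictly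
differentiable at the transformed reference point. -/
def IsGraphStrictDiffAt (Ω : Set X) (d c : ℕ) (z : X) : Prop :=
  ∃ (W : Set X) (Φ : X → Euc d × Euc c) (Ψ : Euc d × Euc c → X)
    (U : Set (Euc d)) (f : Euc d → Euc c) (K : ℝ≥0),
    IsOpen W ∧ z ∈ W ∧ IsOpen (Φ '' W) ∧
    ContDiffOn ℝ 1 Φ W ∧ ContDiffOn ℝ 1 Ψ (Φ '' W) ∧
    (∀ x ∈ W, Ψ (Φ x) = x) ∧ (∀ y ∈ Φ '' W, Φ (Ψ y) = y) ∧
    IsOpen U ∧ LipschitzOnWith K f U ∧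
    Φ '' (Ω ∩ W) = {p | p.1 ∈ U ∧ p.2 = f p.1} ∧
    StrictDiffOnAt f U (Φ z).1

/-- Strong metric subregularity of a set-valued mapping at `(xb, yb)`. -/
def StronglySubregAt (Fm : X → Set Y) (xb : X) (yb : Y) : Prop :=
  ∃ κ : ℝ≥0, ∃ U ∈ 𝓝 xb, ∀ x ∈ U,
    (‖x - xb‖₊ : ℝ≥0∞) ≤ (κ : ℝ≥0∞) * EMetric.infEdist yb (Fm x)

/-- Metric regularity of a set-valued mapping around `(xb, yb)`. -/
def MetricallyRegularAround (Fm : X → Set Y) (xb : X) (yb : Y) : Prop :=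
  ∃ κ : ℝ≥0, ∃ U ∈ 𝓝 xb, ∃ V ∈ 𝓝 yb, ∀ x ∈ U, ∀ y ∈ V,
    EMetric.infEdist x {x' | y ∈ Fm x'} ≤ (κ : ℝ≥0∞) * EMetric.infEdist y (Fm x)

/-- Strong metric regularity of a set-valued mapping around `(xb, yb)`. -/
def StronglyRegularAround (Fm : X → Set Y) (xb : X) (yb : Y) : Prop :=
  MetricallyRegularAround Fm xb yb ∧
  ∃ (U' : Set X) (V' : Set Y) (h : Y → X), IsOpen U' ∧ IsOpen V' ∧
    xb ∈ U' ∧ yb ∈ V' ∧ h yb = xb ∧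
    gphOf Fm ∩ (U' ×ˢ V') = {p | p.2 ∈ V' ∧ p.1 = h p.2}

end NormedDefs

section InnerDefs

variable {E F : Type*} [NormedAddCommGroup E] [InnerProductSpace ℝ E]
  [NormedAddCommGroup F] [InnerProductSpace ℝ F]

/-- The regular (Fréchet) normal cone: the polar of the tangent cone. -/
def regNormal (Ω : Set E) (z : E) : Set E := {v | ∀ w ∈ tanCone Ω z, ⟪v, w⟫ ≤ 0}

/-- The limiting (Mordukhovich) normal cone. -/
def limNormal (Ω : Set E) (z : E) : Set E :=
  {v | ∃ zk vk : ℕ → E, (∀ k, zk k ∈ Ω) ∧ Tendsto zk atTop (𝓝 z) ∧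
      (∀ k, vk k ∈ regNormal Ω (zk k)) ∧ Tendsto vk atTop (𝓝 v)}

/-- `Ω` is normally regular at `z`. -/
def NormallyRegularAt (Ω : Set E) (z : E) : Prop := regNormal Ω z = limNormal Ω z

/-- The orthogonal complement (as a set) of a set. -/
def orthSet (s : Set E) : Set E := {v | ∀ w ∈ s, ⟪v, w⟫ = 0}

/-- `Ω` is semismooth* at `zb`. -/
def SemismoothStarAt (Ω : Set E) (zb : E) : Prop :=
  ∀ ε : ℝ, 0 < ε → ∃ δ > 0, ∀ z ∈ Ω, ‖z - zb‖ < δ → ∀ v ∈ limNormal Ω z,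
    |⟪v, z - zb⟫| ≤ ε * ‖z - zb‖ * ‖v‖

/-- The canonical inner product of the product of two inner product spaces. -/
def inner2 (p q : E × F) : ℝ := ⟪p.1, q.1⟫ + ⟪p.2, q.2⟫

/-- The regular normal cone for subsets of a product space. -/
def regNormal2 (Ω : Set (E × F)) (z : E × F) : Set (E × F) :=
  {v | ∀ w ∈ tanCone Ω z, inner2 v w ≤ 0}

/-- The limiting normal cone for subsets of a product space. -/
def limNormal2 (Ω : Set (E × F)) (z : E × F) : Set (E × F) :=
  {v | ∃ zk vk : ℕ → E × F, (∀ k, zk k ∈ Ω) ∧ Tendsto zk atTop (𝓝 z) ∧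
      (∀ k, vk k ∈ regNormal2 Ω (zk k)) ∧ Tendsto vk atTop (𝓝 v)}

/-- Normal regularity for subsets of a product space. -/
def NormallyRegular2At (Ω : Set (E × F)) (z : E × F) : Prop :=
  regNormal2 Ω z = limNormal2 Ω z

/-- Orthogonal complement (as a set) in a product space. -/
def orthSet2 (s : Set (E × F)) : Set (E × F) := {v | ∀ w ∈ s, inner2 v w = 0}

/-- The graph of the limiting coderivative of a mapping with graph `Γ` at `z`:
`{(y*, x*) : (x*, -y*) ∈ N_Γ(z)}`. -/
def coderivGraph (Γ : Set (E × F)) (z : E × F) : Set (F × E) :=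
  {q | (q.2, -q.1) ∈ limNormal2 Γ z}

/-- The semismooth* property for subsets of a product space (i.e. for mappings). -/
def SemismoothStar2At (Ω : Set (E × F)) (zb : E × F) : Prop :=
  ∀ ε : ℝ, 0 < ε → ∃ δ > 0, ∀ z ∈ Ω, ‖z - zb‖ < δ → ∀ v ∈ limNormal2 Ω z,
    |inner2 v (z - zb)| ≤ ε * ‖z - zb‖ * ‖v‖

/-- The regular subdifferential of an extended-real-valued function. -/
def regSubdiff (φ : E → EReal) (xb : E) : Set E :=
  {v | φ xb ≠ ⊤ ∧ φ xb ≠ ⊥ ∧ ∀ ε : ℝ, 0 < ε → ∃ δ > 0, ∀ x, ‖x - xb‖ < δ →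
      φ xb + ((⟪v, x - xb⟫ - ε * ‖x - xb‖ : ℝ) : EReal) ≤ φ x}

/-- The limiting (Mordukhovich) subdifferential. -/
def limSubdiff (φ : E → EReal) (xb : E) : Set E :=
  {v | ∃ xk vk : ℕ → E, Tendsto xk atTop (𝓝 xb) ∧
      Tendsto (fun k => φ (xk k)) atTop (𝓝 (φ xb)) ∧
      (∀ k, vk k ∈ regSubdiff φ (xk k)) ∧ Tendsto vk atTop (𝓝 v)}

/-- `φ` is prox-regular at `xb` for `vb` with parameters `r ≥ 0` and `ε > 0`. -/
def ProxRegular (φ : E → EReal) (xb vb : E) (r ε : ℝ) : Prop :=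
  ∀ x' x v, ‖x' - xb‖ < ε → v ∈ limSubdiff φ x → ‖x - xb‖ < ε → ‖v - vb‖ < ε →
    φ x < φ xb + (ε : EReal) →
    φ x + ((⟪v, x' - x⟫ - r / 2 * ‖x' - x‖ ^ 2 : ℝ) : EReal) ≤ φ x'

/-- The graph of the `φ`-attentive `ε`-localization of `∂φ` around `(xb, vb)`. -/
def attLocGraph (φ : E → EReal) (xb vb : E) (ε : ℝ) : Set (E × E) :=
  {p | p.2 ∈ limSubdiff φ p.1 ∧ ‖p.1 - xb‖ < ε ∧ ‖p.2 - vb‖ < ε ∧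
      φ p.1 < φ xb + (ε : EReal)}

end InnerDefs

/-- The map `ℝⁿ → ℝᵈ × ℝᶜ` obtained from a permutation (re-indexing) of the
coordinates followed by splitting them into the first `d` and the last `c` ones. -/
def permSplit {n d c : ℕ} (e : Fin n ≃ (Fin d ⊕ Fin c)) (z : Euc n) : Euc d × Euc c :=
  (show Euc d from WithLp.toLp 2 (fun i => z (e.symm (Sum.inl i))),
   show Euc c from WithLp.toLp 2 (fun j => z (e.symm (Sum.inr j))))

/-!
The chart `Φ` is a `C¹` diffeomorphism, so its derivative at `z̄` maps the
paratingent cone of `Ω` onto that of the graph of the `K`-Lipschitz map `f`, and the adjoint of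
the derivative of `Φ⁻¹` maps the limiting normal cone of `Ω` onto that of the graph.
On the graph, every paratingent vector `(u, w)` satisfies `‖w‖ ≤ K ‖u‖`, and every `u` is the
first component of a tangent vector (a limit of difference quotients, by compactness); hence the
first projection is a bijection from the paratingent cone, if it is a subspace, onto `ℝᵈ`.
Dually, every limiting normal `(a, b)` satisfies `‖a‖ ≤ K ‖b‖`, and every `b` occurs: by
Rademacher's theorem `f` is differentiable at points `xₖ → x̄`, where `(-∇f(xₖ)ᵀ b, b)` is a
regular normal, and these converge along a subsequence. So the second projection is a bijection
from the limiting normal cone, if it is a subspace, onto `ℝⁿ⁻ᵈ`.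
-/
section Cones

variable {X Y : Type*} [NormedAddCommGroup X] [NormedSpace ℝ X]
  [NormedAddCommGroup Y] [NormedSpace ℝ Y]

lemma exists_shift_of_eventually {p : ℕ → Prop} (h : ∀ᶠ k in atTop, p k) :
    ∃ N, ∀ k, p (k + N) := by
  obtain ⟨N, hN⟩ := eventually_atTop.mp h
  exact ⟨N, fun k => hN _ (Nat.le_add_left N k)⟩

lemma mem_tanCone_of_eventually {Ω : Set X} {z w : X} {t : ℕ → ℝ} {wk : ℕ → X}
    (ht0 : ∀ k, 0 < t k) (ht : Tendsto t atTop (𝓝 0)) (hwk : Tendsto wk atTop (𝓝 w))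
    (hmem : ∀ᶠ k in atTop, z + t k • wk k ∈ Ω) : w ∈ tanCone Ω z := by
  obtain ⟨N, hN⟩ := exists_shift_of_eventually hmem
  have hshift := tendsto_add_atTop_nat N
  exact ⟨fun k => t (k + N), fun k => wk (k + N), fun k => ht0 _, ht.comp hshift,
    hwk.comp hshift, hN⟩

lemma mem_paraCone_of_eventually {Ω : Set X} {z w : X} {zk : ℕ → X} {t : ℕ → ℝ}
    {wk : ℕ → X} (hzk : Tendsto zk atTop (𝓝 z)) (ht0 : ∀ k, 0 < t k)
    (ht : Tendsto t atTop (𝓝 0)) (hwk : Tendsto wk atTop (𝓝 w))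
    (hmem : ∀ᶠ k in atTop, zk k ∈ Ω ∧ zk k + t k • wk k ∈ Ω) : w ∈ paraCone Ω z := by
  obtain ⟨N, hN⟩ := exists_shift_of_eventually hmem
  have hshift := tendsto_add_atTop_nat N
  exact ⟨fun k => zk (k + N), fun k => t (k + N), fun k => wk (k + N), fun k => (hN k).1,
    hzk.comp hshift, fun k => ht0 _, ht.comp hshift, hwk.comp hshift, fun k => (hN k).2⟩

lemma tanCone_mono {Ω₁ Ω₂ : Set X} (h : Ω₁ ⊆ Ω₂) (z : X) : tanCone Ω₁ z ⊆ tanCone Ω₂ z := by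
  rintro w ⟨t, wk, ht0, ht, hwk, hmem⟩
  exact ⟨t, wk, ht0, ht, hwk, fun k => h (hmem k)⟩

lemma paraCone_mono {Ω₁ Ω₂ : Set X} (h : Ω₁ ⊆ Ω₂) (z : X) :
    paraCone Ω₁ z ⊆ paraCone Ω₂ z := by
  rintro w ⟨zk, t, wk, hm, hz, ht0, ht, hwk, hmem⟩
  exact ⟨zk, t, wk, fun k => h (hm k), hz, ht0, ht, hwk, fun k => h (hmem k)⟩

lemma tanCone_subset_paraCone {Ω : Set X} {z : X} (hz : z ∈ Ω) :
    tanCone Ω z ⊆ paraCone Ω z := by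
  rintro w ⟨t, wk, ht0, ht, hwk, hmem⟩
  exact ⟨fun _ => z, t, wk, fun _ => hz, tendsto_const_nhds, ht0, ht, hwk, hmem⟩

lemma tendsto_add_smul {zk : ℕ → X} {z w : X} {t : ℕ → ℝ} {wk : ℕ → X}
    (hzk : Tendsto zk atTop (𝓝 z)) (ht : Tendsto t atTop (𝓝 0))
    (hwk : Tendsto wk atTop (𝓝 w)) : Tendsto (fun k => zk k + t k • wk k) atTop (𝓝 z) := by
  simpa using hzk.add (ht.smul hwk)

lemma tanCone_inter_of_mem_nhds {Ω W : Set X} {z : X} (hW : W ∈ 𝓝 z) :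
    tanCone (Ω ∩ W) z = tanCone Ω z := by
  refine Subset.antisymm (tanCone_mono inter_subset_left z) ?_
  rintro w ⟨t, wk, ht0, ht, hwk, hmem⟩
  refine mem_tanCone_of_eventually ht0 ht hwk ?_
  filter_upwards [(tendsto_add_smul tendsto_const_nhds ht hwk).eventually hW]
    with k hk using ⟨hmem k, hk⟩

lemma paraCone_inter_of_mem_nhds {Ω W : Set X} {z : X} (hW : W ∈ 𝓝 z) :
    paraCone (Ω ∩ W) z = paraCone Ω z := by
  refine Subset.antisymm (paraCone_mono inter_subset_left z) ?_
  rintro w ⟨zk, t, wk, hm, hz, ht0, ht, hwk, hmem⟩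
  refine mem_paraCone_of_eventually hz ht0 ht hwk ?_
  filter_upwards [hz.eventually hW, (tendsto_add_smul hz ht hwk).eventually hW]
    with k hk hk' using ⟨⟨hm k, hk⟩, hmem k, hk'⟩

lemma tendsto_inv_smul_sub_of_isLittleO {g : X → Y} {B : X →L[ℝ] Y} {zk wk : ℕ → X} {w : X}
    {t : ℕ → ℝ} (ht0 : ∀ k, 0 < t k) (hwk : Tendsto wk atTop (𝓝 w))
    (ho : (fun k => g (zk k + t k • wk k) - g (zk k) - B (t k • wk k)) =o[atTop]
      fun k => t k • wk k) :
    Tendsto (fun k => (t k)⁻¹ • (g (zk k + t k • wk k) - g (zk k))) atTop (𝓝 (B w)) := by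
  have hsmul : (fun k => (t k)⁻¹ • (g (zk k + t k • wk k) - g (zk k) - B (t k • wk k)))
      =o[atTop] wk := by
    refine ((Asymptotics.isBigO_refl (fun k => (t k)⁻¹) atTop).smul_isLittleO ho).congr_right
      fun k => ?_
    rw [inv_smul_smul₀ (ht0 k).ne']
  have hzero := Asymptotics.isLittleO_one_iff ℝ |>.mp (hsmul.trans_isBigO (hwk.isBigO_one ℝ))
  have hsum := hzero.add ((B.continuous.tendsto w).comp hwk)
  rw [zero_add] at hsum
  refine hsum.congr fun k => ?_
  rw [Function.comp_apply, map_smul, smul_sub, inv_smul_smul₀ (ht0 k).ne', sub_add_cancel]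

lemma tanCone_image {Ω : Set X} {z w : X} {g : X → Y} {B : X →L[ℝ] Y}
    (hg : HasFDerivAt g B z) (hw : w ∈ tanCone Ω z) : B w ∈ tanCone (g '' Ω) (g z) := by
  obtain ⟨t, wk, ht0, ht, hwk, hmem⟩ := hw
  have ho := hg.isLittleO.comp_tendsto (tendsto_add_smul tendsto_const_nhds ht hwk)
  refine ⟨t, fun k => (t k)⁻¹ • (g (z + t k • wk k) - g z), ht0, ht,
    tendsto_inv_smul_sub_of_isLittleO (zk := fun _ => z) ht0 hwk
      (by simpa [Function.comp_def] using ho), fun k => ?_⟩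
  rw [smul_inv_smul₀ (ht0 k).ne', add_sub_cancel]
  exact mem_image_of_mem g (hmem k)

lemma paraCone_image {Ω : Set X} {z w : X} {g : X → Y} {B : X →L[ℝ] Y}
    (hg : HasStrictFDerivAt g B z) (hw : w ∈ paraCone Ω z) : B w ∈ paraCone (g '' Ω) (g z) := by
  obtain ⟨zk, t, wk, hm, hz, ht0, ht, hwk, hmem⟩ := hw
  have ho := hg.isLittleO.comp_tendsto ((tendsto_add_smul hz ht hwk).prodMk_nhds hz)
  refine ⟨fun k => g (zk k), t, fun k => (t k)⁻¹ • (g (zk k + t k • wk k) - g (zk k)),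
    fun k => mem_image_of_mem g (hm k), hg.continuousAt.tendsto.comp hz, ht0, ht,
    tendsto_inv_smul_sub_of_isLittleO ht0 hwk (by simpa [Function.comp_def] using ho),
    fun k => ?_⟩
  rw [smul_inv_smul₀ (ht0 k).ne', add_sub_cancel]
  exact mem_image_of_mem g (hmem k)

lemma eq_zero_of_mem_tanCone_singleton {y w : X} (hw : w ∈ tanCone {y} y) : w = 0 := by
  obtain ⟨t, wk, ht0, -, hwk, hmem⟩ := hw
  have hzero : wk = fun _ => 0 := funext fun k => by
    simpa [(ht0 k).ne'] using hmem k
  exact tendsto_nhds_unique hwk (hzero ▸ tendsto_const_nhds)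

lemma map_eq_zero_of_mem_tanCone {Ω : Set X} {z w : X} {g : X → Y} {B : X →L[ℝ] Y}
    (hg : HasFDerivAt g B z) (hconst : ∀ x ∈ Ω, g x = g z) (hw : w ∈ tanCone Ω z) :
    B w = 0 := by
  refine eq_zero_of_mem_tanCone_singleton (tanCone_mono ?_ _ (tanCone_image hg hw))
  rintro _ ⟨x, hx, rfl⟩
  exact hconst x hx

end Cones

section Graph

variable {E₁ E₂ : Type*} [NormedAddCommGroup E₁] [NormedSpace ℝ E₁]
  [NormedAddCommGroup E₂] [NormedSpace ℝ E₂] {U : Set E₁} {f : E₁ → E₂} {K : ℝ≥0}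

lemma norm_snd_le_of_add_smul_mem_gphOn (hf : LipschitzOnWith K f U) {p w : E₁ × E₂} {t : ℝ}
    (ht : 0 < t) (hp : p ∈ gphOn f U) (hpw : p + t • w ∈ gphOn f U) :
    ‖w.2‖ ≤ K * ‖w.1‖ := by
  have hlip := hf.norm_sub_le hpw.1 hp.1
  rw [← hpw.2, ← hp.2] at hlip
  simp only [Prod.fst_add, Prod.snd_add, Prod.smul_fst, Prod.smul_snd, add_sub_cancel_left,
    norm_smul, Real.norm_of_nonneg ht.le] at hlip
  nlinarith

lemma norm_snd_le_of_mem_paraCone_gphOn (hf : LipschitzOnWith K f U) {p w : E₁ × E₂}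
    (hw : w ∈ paraCone (gphOn f U) p) : ‖w.2‖ ≤ K * ‖w.1‖ := by
  obtain ⟨zk, t, wk, hm, -, ht0, -, hwk, hmem⟩ := hw
  have hfst := (continuous_norm.comp continuous_fst).tendsto w |>.comp hwk
  have hsnd := (continuous_norm.comp continuous_snd).tendsto w |>.comp hwk
  exact le_of_tendsto_of_tendsto' hsnd (hfst.const_mul (K : ℝ))
    fun k => norm_snd_le_of_add_smul_mem_gphOn hf (ht0 k) (hm k) (hmem k)

lemma exists_mem_tanCone_gphOn [ProperSpace E₂] (hU : IsOpen U) (hf : LipschitzOnWith K f U)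
    {x : E₁} (hx : x ∈ U) (u : E₁) :
    ∃ w : E₂, ‖w‖ ≤ K * ‖u‖ ∧ (u, w) ∈ tanCone (gphOn f U) (x, f x) := by
  set t : ℕ → ℝ := fun k => 1 / (k + 1)
  have ht0 : ∀ k, 0 < t k := fun k => Nat.one_div_pos_of_nat
  have ht : Tendsto t atTop (𝓝 0) := tendsto_one_div_add_atTop_nhds_zero_nat
  set q : ℕ → E₂ := fun k => (t k)⁻¹ • (f (x + t k • u) - f x)
  have hstep : ∀ k, (x, f x) + t k • (u, q k) = (x + t k • u, f (x + t k • u)) := fun k => by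
    simp [q, smul_inv_smul₀ (ht0 k).ne']
  have hmem : ∀ᶠ k in atTop, (x, f x) + t k • (u, q k) ∈ gphOn f U := by
    filter_upwards [(tendsto_add_smul tendsto_const_nhds ht
      (tendsto_const_nhds (x := u))).eventually (hU.mem_nhds hx)] with k hk
    rw [hstep]
    exact ⟨hk, rfl⟩
  have hbound : ∀ᶠ k in atTop, q k ∈ closedBall 0 (K * ‖u‖) := hmem.mono fun k hk =>
    mem_closedBall_zero_iff.mpr (norm_snd_le_of_add_smul_mem_gphOn hf (ht0 k) ⟨hx, rfl⟩ hk)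
  obtain ⟨w, hw, φ, hφ, hqφ⟩ :=
    tendsto_subseq_of_frequently_bounded isBounded_closedBall hbound.frequently
  rw [closure_closedBall] at hw
  exact ⟨w, mem_closedBall_zero_iff.mp hw, mem_tanCone_of_eventually (fun k => ht0 (φ k))
    (ht.comp hφ.tendsto_atTop) (tendsto_const_nhds.prodMk_nhds hqφ)
    (hφ.tendsto_atTop.eventually hmem)⟩

lemma snd_eq_of_mem_tanCone_gphOn {A : E₁ →L[ℝ] E₂} {x : E₁} (hA : HasFDerivAt f A x)
    {w : E₁ × E₂} (hw : w ∈ tanCone (gphOn f U) (x, f x)) : w.2 = A w.1 := by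
  have hg : HasFDerivAt (fun p : E₁ × E₂ => p.2 - f p.1)
      (ContinuousLinearMap.snd ℝ E₁ E₂ - A.comp (ContinuousLinearMap.fst ℝ E₁ E₂)) (x, f x) :=
    hasFDerivAt_snd.sub (hA.comp (x, f x) hasFDerivAt_fst)
  have h := map_eq_zero_of_mem_tanCone hg (fun p hp => by simp [hp.2]) hw
  simpa [sub_eq_zero] using h

lemma exists_seq_tendsto_differentiableAt [FiniteDimensional ℝ E₁] [FiniteDimensional ℝ E₂]
    [MeasurableSpace E₁] [BorelSpace E₁] (hU : IsOpen U) (hf : LipschitzOnWith K f U) {x : E₁}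
    (hx : x ∈ U) :
    ∃ xk : ℕ → E₁, Tendsto xk atTop (𝓝 x) ∧ ∀ k, xk k ∈ U ∧ DifferentiableAt ℝ f (xk k) := by
  let μ : MeasureTheory.Measure E₁ := MeasureTheory.Measure.addHaar
  have hae : ∀ᵐ y ∂μ, y ∈ U → DifferentiableWithinAt ℝ f U y :=
    hf.ae_differentiableWithinAt_of_mem
  suffices h : ∃ᶠ y in 𝓝 x, y ∈ U ∧ DifferentiableAt ℝ f y from frequently_iff_seq_forall.mp h
  refine frequently_iff.mpr fun {V} hV => ?_
  set O := interior (V ∩ U)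
  have hO : μ O ≠ 0 := (isOpen_interior.measure_pos μ
    ⟨x, mem_interior_iff_mem_nhds.mpr (inter_mem hV (hU.mem_nhds hx))⟩).ne'
  have : (MeasureTheory.ae (μ.restrict O)).NeBot := MeasureTheory.ae_restrict_neBot.mpr hO
  obtain ⟨y, hyO, hy⟩ := ((MeasureTheory.ae_restrict_mem (s := O) isOpen_interior.measurableSet).and
    (MeasureTheory.ae_restrict_of_ae hae)).exists
  have hyVU := interior_subset hyO
  exact ⟨y, hyVU.1, hyVU.2, (hy hyVU.2).differentiableAt (hU.mem_nhds hyVU.2)⟩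

end Graph

theorem Filter.Tendsto.clm_apply {𝕜 X Y : Type*} [NontriviallyNormedField 𝕜]
    [NormedAddCommGroup X] [NormedSpace 𝕜 X] [NormedAddCommGroup Y] [NormedSpace 𝕜 Y]
    {α : Type*} {l : Filter α} {M : α → X →L[𝕜] Y} {M₀ : X →L[𝕜] Y} {x : α → X} {x₀ : X}
    (hM : Tendsto M l (𝓝 M₀)) (hx : Tendsto x l (𝓝 x₀)) :
    Tendsto (fun a => M a (x a)) l (𝓝 (M₀ x₀)) :=
  (isBoundedBilinearMap_apply.continuous.tendsto (M₀, x₀)).comp (hM.prodMk_nhds hx)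

lemma ContinuousLinearEquiv.map_mem_tanCone_image_iff {X Y : Type*} [NormedAddCommGroup X]
    [NormedSpace ℝ X] [NormedAddCommGroup Y] [NormedSpace ℝ Y] (L : X ≃L[ℝ] Y) {Ω : Set X}
    {z w : X} : L w ∈ tanCone (L '' Ω) (L z) ↔ w ∈ tanCone Ω z := by
  refine ⟨fun hw => ?_, tanCone_image L.hasFDerivAt⟩
  simpa [image_image] using tanCone_image L.symm.hasFDerivAt hw

section Normals

variable {E F : Type*} [NormedAddCommGroup E] [InnerProductSpace ℝ E]
  [NormedAddCommGroup F] [InnerProductSpace ℝ F]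

lemma mem_limNormal_of_eventually {Ω : Set E} {z v : E} {zk vk : ℕ → E}
    (hzk : Tendsto zk atTop (𝓝 z)) (hvk : Tendsto vk atTop (𝓝 v))
    (h : ∀ᶠ k in atTop, zk k ∈ Ω ∧ vk k ∈ regNormal Ω (zk k)) : v ∈ limNormal Ω z := by
  obtain ⟨N, hN⟩ := exists_shift_of_eventually h
  have hshift := tendsto_add_atTop_nat N
  exact ⟨fun k => zk (k + N), fun k => vk (k + N), fun k => (hN k).1, hzk.comp hshift,
    fun k => (hN k).2, hvk.comp hshift⟩

lemma adjoint_mem_regNormal [CompleteSpace E] [CompleteSpace F] {Ω W : Set E} {Γ : Set F}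
    {x : E} {g : E → F} {A : E →L[ℝ] F} (hg : HasFDerivAt g A x) (hW : W ∈ 𝓝 x)
    (hmaps : MapsTo g (Ω ∩ W) Γ) {q : F} (hq : q ∈ regNormal Γ (g x)) :
    ContinuousLinearMap.adjoint A q ∈ regNormal Ω x := by
  intro w hw
  rw [← tanCone_inter_of_mem_nhds hW] at hw
  rw [ContinuousLinearMap.adjoint_inner_left]
  exact hq _ (tanCone_mono hmaps.image_subset _ (tanCone_image hg hw))

lemma adjoint_fderiv_mem_limNormal_of_leftInverse [CompleteSpace E] [CompleteSpace F]
    {Ω W : Set E} {Γ : Set F} {z : E} {g : E → F} {h : F → E}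
    (hW : IsOpen W) (hz : z ∈ W) (hg : ContDiffOn ℝ 1 g W) (hh : ContinuousAt h (g z))
    (hhz : h (g z) = z) (hmaps : MapsTo g (Ω ∩ W) Γ)
    (hinv : ∀ᶠ p in 𝓝 (g z), p ∈ Γ → h p ∈ Ω ∩ W ∧ g (h p) = p) {q : F}
    (hq : q ∈ limNormal Γ (g z)) :
    ContinuousLinearMap.adjoint (fderiv ℝ g z) q ∈ limNormal Ω z := by
  obtain ⟨pk, qk, hpk, hpkz, hqk, hqkq⟩ := hq
  have hxk : Tendsto (fun k => h (pk k)) atTop (𝓝 z) := hhz ▸ hh.tendsto.comp hpkz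
  have hDg : Tendsto (fun k => fderiv ℝ g (h (pk k))) atTop (𝓝 (fderiv ℝ g z)) :=
    ((hg.continuousOn_fderiv_of_isOpen hW le_rfl).continuousAt (hW.mem_nhds hz)).tendsto.comp
      hxk
  refine mem_limNormal_of_eventually hxk
    ((ContinuousLinearMap.adjoint.continuous.tendsto _ |>.comp hDg).clm_apply hqkq) ?_
  filter_upwards [hpkz.eventually hinv] with k hk
  obtain ⟨hxΩW, hgx⟩ := hk (hpk k)
  have hdiff : HasFDerivAt g (fderiv ℝ g (h (pk k))) (h (pk k)) :=
    ((hg.contDiffAt (hW.mem_nhds hxΩW.2)).differentiableAt one_ne_zero).hasFDerivAt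
  exact ⟨hxΩW.1, adjoint_mem_regNormal hdiff (hW.mem_nhds hxΩW.2) hmaps (by rw [hgx]; exact hqk k)⟩

end Normals

section GraphNormals

variable {E₁ E₂ : Type*} [NormedAddCommGroup E₁] [InnerProductSpace ℝ E₁]
  [NormedAddCommGroup E₂] [InnerProductSpace ℝ E₂] {U : Set E₁} {f : E₁ → E₂} {K : ℝ≥0}

local notation "toLp" => WithLp.toLp 2

lemma toLp_mem_tanCone_image_iff {Ω : Set (E₁ × E₂)} {z w : E₁ × E₂} :
    toLp w ∈ tanCone (toLp '' Ω) (toLp z) ↔ w ∈ tanCone Ω z :=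
  (WithLp.prodContinuousLinearEquiv 2 ℝ E₁ E₂).symm.map_mem_tanCone_image_iff

lemma norm_fst_le_of_mem_regNormal_gphOn [ProperSpace E₂] (hU : IsOpen U)
    (hf : LipschitzOnWith K f U) {x : E₁} (hx : x ∈ U) {q : WithLp 2 (E₁ × E₂)}
    (hq : q ∈ regNormal (toLp '' gphOn f U) (toLp (x, f x))) : ‖q.fst‖ ≤ K * ‖q.snd‖ := by
  obtain ⟨w, hwK, hw⟩ := exists_mem_tanCone_gphOn hU hf hx q.fst
  have hinner : ⟪q.fst, q.fst⟫ + ⟪q.snd, w⟫ ≤ 0 := by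
    simpa using hq _ (toLp_mem_tanCone_image_iff.mpr hw)
  have hcs : -⟪q.snd, w⟫ ≤ ‖q.snd‖ * (K * ‖q.fst‖) :=
    (neg_le_abs _).trans <| (abs_real_inner_le_norm _ _).trans <|
      mul_le_mul_of_nonneg_left hwK (norm_nonneg _)
  rw [real_inner_self_eq_norm_sq] at hinner
  rcases (norm_nonneg q.fst).eq_or_lt with h0 | hpos
  · rw [← h0]
    positivity
  · exact le_of_mul_le_mul_right (by nlinarith) hpos

lemma norm_fst_le_of_mem_limNormal_gphOn [ProperSpace E₂] (hU : IsOpen U)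
    (hf : LipschitzOnWith K f U) {p q : WithLp 2 (E₁ × E₂)}
    (hq : q ∈ limNormal (toLp '' gphOn f U) p) : ‖q.fst‖ ≤ K * ‖q.snd‖ := by
  obtain ⟨pk, qk, hpk, -, hqk, hqkq⟩ := hq
  have hbound : ∀ k, ‖(qk k).fst‖ ≤ K * ‖(qk k).snd‖ := fun k => by
    obtain ⟨⟨x, y⟩, ⟨hx, hy : y = f x⟩, hpx⟩ := hpk k
    subst hy
    exact norm_fst_le_of_mem_regNormal_gphOn hU hf hx (hpx ▸ hqk k)
  have hfst := (continuous_norm.comp (WithLp.continuous_fst 2 E₁ E₂)).tendsto q |>.comp hqkq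
  have hsnd := (continuous_norm.comp (WithLp.continuous_snd 2 E₁ E₂)).tendsto q |>.comp hqkq
  exact le_of_tendsto_of_tendsto' hfst (hsnd.const_mul (K : ℝ)) hbound

lemma mem_regNormal_gphOn_of_hasFDerivAt [CompleteSpace E₁] [CompleteSpace E₂]
    {A : E₁ →L[ℝ] E₂} {x : E₁} (hA : HasFDerivAt f A x) (b : E₂) :
    toLp (-ContinuousLinearMap.adjoint A b, b) ∈ regNormal (toLp '' gphOn f U) (toLp (x, f x)) := by
  intro w hw
  rw [← WithLp.toLp_ofLp (p := 2) w, toLp_mem_tanCone_image_iff] at hw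
  have hsnd := snd_eq_of_mem_tanCone_gphOn hA hw
  simp only [WithLp.prod_inner_apply, inner_neg_left,
    ContinuousLinearMap.adjoint_inner_left] at hsnd ⊢
  rw [hsnd]
  simp

lemma exists_mem_limNormal_gphOn [FiniteDimensional ℝ E₁] [FiniteDimensional ℝ E₂]
    [MeasurableSpace E₁] [BorelSpace E₁] (hU : IsOpen U) (hf : LipschitzOnWith K f U) {x : E₁}
    (hx : x ∈ U) (b : E₂) :
    ∃ a : E₁, toLp (a, b) ∈ limNormal (toLp '' gphOn f U) (toLp (x, f x)) := by
  obtain ⟨xk, hxk, hxkU⟩ := exists_seq_tendsto_differentiableAt hU hf hx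
  have hAk : ∀ k, fderiv ℝ f (xk k) ∈ closedBall 0 K := fun k => mem_closedBall_zero_iff.mpr
    ((hxkU k).2.hasFDerivAt.le_of_lipschitzOn (hU.mem_nhds (hxkU k).1) hf)
  obtain ⟨A, -, φ, hφ, hAφ⟩ := tendsto_subseq_of_bounded isBounded_closedBall hAk
  have hxφ := hxk.comp hφ.tendsto_atTop
  have hfx : ContinuousAt f x := hf.continuousOn.continuousAt (hU.mem_nhds hx)
  have htoLp := WithLp.prod_continuous_toLp 2 E₁ E₂
  refine ⟨-ContinuousLinearMap.adjoint A b, fun k => toLp (xk (φ k), f (xk (φ k))),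
    fun k => toLp (-ContinuousLinearMap.adjoint (fderiv ℝ f (xk (φ k))) b, b),
    fun k => mem_image_of_mem _ ⟨(hxkU _).1, rfl⟩,
    htoLp.tendsto _ |>.comp (hxφ.prodMk_nhds (hfx.tendsto.comp hxφ)),
    fun k => mem_regNormal_gphOn_of_hasFDerivAt (hxkU _).2.hasFDerivAt b,
    htoLp.tendsto _ |>.comp (Tendsto.prodMk_nhds ?_ tendsto_const_nhds)⟩
  exact ((ContinuousLinearMap.adjoint.continuous.tendsto A).comp hAφ).clm_apply
    tendsto_const_nhds |>.neg

end GraphNormals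

lemma finrank_eq_of_injOn_of_surjective {K V V' : Type*} [DivisionRing K] [AddCommGroup V]
    [Module K V] [AddCommGroup V'] [Module K V'] {S : Submodule K V} (π : V →ₗ[K] V')
    (hinj : ∀ v ∈ S, π v = 0 → v = 0) (hsurj : ∀ y, ∃ v ∈ S, π v = y) :
    Module.finrank K S = Module.finrank K V' := by
  refine (LinearEquiv.ofBijective (π.domRestrict S) ⟨?_, fun y => ?_⟩).finrank_eq
  · refine (injective_iff_map_eq_zero _).mpr fun v hv => Subtype.ext (hinj v v.2 hv)
  · obtain ⟨v, hv, rfl⟩ := hsurj y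
    exact ⟨⟨v, hv⟩, rfl⟩

lemma HasFDerivAt.comp_eq_id_of_eventually_leftInverse {X Y : Type*} [NormedAddCommGroup X]
    [NormedSpace ℝ X] [NormedAddCommGroup Y] [NormedSpace ℝ Y] {Φ : X → Y} {Ψ : Y → X}
    {B : X →L[ℝ] Y} {C : Y →L[ℝ] X} {z : X} (hB : HasFDerivAt Φ B z)
    (hC : HasFDerivAt Ψ C (Φ z)) (hinv : ∀ᶠ x in 𝓝 z, Ψ (Φ x) = x) :
    C.comp B = ContinuousLinearMap.id ℝ X :=
  ((hC.comp z hB).congr_of_eventuallyEq (hinv.mono fun _ h => h.symm)).unique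
    (hasFDerivAt_id z)

structure IsC1Chart {X Y : Type*} [NormedAddCommGroup X] [NormedSpace ℝ X]
    [NormedAddCommGroup Y] [NormedSpace ℝ Y] (W : Set X) (Φ : X → Y) (Ψ : Y → X) : Prop where
  isOpen : IsOpen W
  isOpen_image : IsOpen (Φ '' W)
  contDiffOn : ContDiffOn ℝ 1 Φ W
  contDiffOn_inv : ContDiffOn ℝ 1 Ψ (Φ '' W)
  left_inv : ∀ x ∈ W, Ψ (Φ x) = x
  right_inv : ∀ y ∈ Φ '' W, Φ (Ψ y) = y

namespace IsC1Chart

variable {X Y Z : Type*} [NormedAddCommGroup X] [NormedSpace ℝ X] [NormedAddCommGroup Y]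
  [NormedSpace ℝ Y] [NormedAddCommGroup Z] [NormedSpace ℝ Z]
  {W : Set X} {Φ : X → Y} {Ψ : Y → X} {z : X}

lemma image_inv_image (h : IsC1Chart W Φ Ψ) (A : Set X) : Ψ '' (Φ '' (A ∩ W)) = A ∩ W := by
  rw [image_image, image_congr fun x hx => h.left_inv x hx.2, image_id']

lemma symm (h : IsC1Chart W Φ Ψ) : IsC1Chart (Φ '' W) Ψ Φ := by
  have hW : Ψ '' (Φ '' W) = W := by simpa using h.image_inv_image univ
  refine ⟨h.isOpen_image, ?_, h.contDiffOn_inv, ?_, h.right_inv, ?_⟩ <;> rw [hW]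
  exacts [h.isOpen, h.contDiffOn, h.left_inv]

lemma comp_continuousLinearEquiv (h : IsC1Chart W Φ Ψ) (L : Y ≃L[ℝ] Z) :
    IsC1Chart W (L ∘ Φ) (Ψ ∘ L.symm) := by
  have hW : (L ∘ Φ) '' W = L '' (Φ '' W) := image_comp L Φ W
  refine ⟨h.isOpen, hW ▸ L.isOpenMap _ h.isOpen_image, L.contDiff.comp_contDiffOn h.contDiffOn,
    ?_, fun x hx => by simp [h.left_inv x hx], ?_⟩
  · refine h.contDiffOn_inv.comp L.symm.contDiff.contDiffOn ?_
    rw [hW]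
    rintro _ ⟨p, hp, rfl⟩
    simpa using hp
  · rw [hW]
    rintro _ ⟨y, hy, rfl⟩
    simp [h.right_inv y hy]

lemma hasStrictFDerivAt (h : IsC1Chart W Φ Ψ) (hz : z ∈ W) :
    HasStrictFDerivAt Φ (fderiv ℝ Φ z) z :=
  (h.contDiffOn.contDiffAt (h.isOpen.mem_nhds hz)).hasStrictFDerivAt one_ne_zero

lemma fderiv_inv_comp_fderiv (h : IsC1Chart W Φ Ψ) (hz : z ∈ W) :
    (fderiv ℝ Ψ (Φ z)).comp (fderiv ℝ Φ z) = ContinuousLinearMap.id ℝ X :=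
  (h.hasStrictFDerivAt hz).hasFDerivAt.comp_eq_id_of_eventually_leftInverse
    (h.symm.hasStrictFDerivAt (mem_image_of_mem Φ hz)).hasFDerivAt
    (eventually_of_mem (h.isOpen.mem_nhds hz) h.left_inv)

lemma fderiv_comp_fderiv_inv (h : IsC1Chart W Φ Ψ) (hz : z ∈ W) :
    (fderiv ℝ Φ z).comp (fderiv ℝ Ψ (Φ z)) = ContinuousLinearMap.id ℝ Y := by
  simpa [h.left_inv z hz] using h.symm.fderiv_inv_comp_fderiv (mem_image_of_mem Φ hz)

lemma fderiv_mem_paraCone (h : IsC1Chart W Φ Ψ) (hz : z ∈ W) {Ω : Set X} {v : X}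
    (hv : v ∈ paraCone Ω z) : fderiv ℝ Φ z v ∈ paraCone (Φ '' (Ω ∩ W)) (Φ z) := by
  rw [← paraCone_inter_of_mem_nhds (h.isOpen.mem_nhds hz)] at hv
  exact paraCone_image (h.hasStrictFDerivAt hz) hv

lemma fderiv_inv_mem_paraCone (h : IsC1Chart W Φ Ψ) (hz : z ∈ W) {Ω : Set X} {p : Y}
    (hp : p ∈ paraCone (Φ '' (Ω ∩ W)) (Φ z)) : fderiv ℝ Ψ (Φ z) p ∈ paraCone Ω z := by
  have h' := h.symm.fderiv_mem_paraCone (mem_image_of_mem Φ hz) hp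
  rw [inter_eq_left.mpr (image_mono inter_subset_right), h.image_inv_image,
    h.left_inv z hz] at h'
  exact paraCone_mono inter_subset_left z h'

end IsC1Chart

namespace IsC1Chart

variable {E F : Type*} [NormedAddCommGroup E] [InnerProductSpace ℝ E] [CompleteSpace E]
  [NormedAddCommGroup F] [InnerProductSpace ℝ F] [CompleteSpace F]
  {W : Set E} {Φ : E → F} {Ψ : F → E} {z : E} {Ω : Set E}

lemma adjoint_fderiv_adjoint_fderiv_inv (h : IsC1Chart W Φ Ψ) (hz : z ∈ W) (v : E) :
    ContinuousLinearMap.adjoint (fderiv ℝ Φ z)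
      (ContinuousLinearMap.adjoint (fderiv ℝ Ψ (Φ z)) v) = v := by
  rw [← ContinuousLinearMap.comp_apply, ← ContinuousLinearMap.adjoint_comp,
    h.fderiv_inv_comp_fderiv hz, ContinuousLinearMap.adjoint_id]
  rfl

lemma adjoint_fderiv_inv_adjoint_fderiv (h : IsC1Chart W Φ Ψ) (hz : z ∈ W) (q : F) :
    ContinuousLinearMap.adjoint (fderiv ℝ Ψ (Φ z))
      (ContinuousLinearMap.adjoint (fderiv ℝ Φ z) q) = q := by
  rw [← ContinuousLinearMap.comp_apply, ← ContinuousLinearMap.adjoint_comp,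
    h.fderiv_comp_fderiv_inv hz, ContinuousLinearMap.adjoint_id]
  rfl

lemma adjoint_fderiv_mem_limNormal (h : IsC1Chart W Φ Ψ) (hz : z ∈ W) {q : F}
    (hq : q ∈ limNormal (Φ '' (Ω ∩ W)) (Φ z)) :
    ContinuousLinearMap.adjoint (fderiv ℝ Φ z) q ∈ limNormal Ω z := by
  refine adjoint_fderiv_mem_limNormal_of_leftInverse h.isOpen hz h.contDiffOn
    (h.contDiffOn_inv.continuousOn.continuousAt
      (h.isOpen_image.mem_nhds (mem_image_of_mem Φ hz))) (h.left_inv z hz) (mapsTo_image Φ _)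
    (Eventually.of_forall ?_) hq
  rintro _ ⟨x, hx, rfl⟩
  rw [h.left_inv x hx.2]
  exact ⟨hx, rfl⟩

lemma adjoint_fderiv_inv_mem_limNormal (h : IsC1Chart W Φ Ψ) (hz : z ∈ W) {v : E}
    (hv : v ∈ limNormal Ω z) :
    ContinuousLinearMap.adjoint (fderiv ℝ Ψ (Φ z)) v ∈ limNormal (Φ '' (Ω ∩ W)) (Φ z) := by
  have hΨΦ := h.left_inv z hz
  refine adjoint_fderiv_mem_limNormal_of_leftInverse h.isOpen_image (mem_image_of_mem Φ hz)
    h.contDiffOn_inv (hΨΦ ▸ h.contDiffOn.continuousOn.continuousAt (h.isOpen.mem_nhds hz))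
    (by rw [hΨΦ]) ?_ ?_ (by rwa [hΨΦ])
  · rintro _ ⟨⟨x, hx, rfl⟩, -⟩
    rw [h.left_inv x hx.2]
    exact hx.1
  · rw [hΨΦ]
    filter_upwards [h.isOpen.mem_nhds hz] with p hpW hpΩ
    exact ⟨⟨mem_image_of_mem Φ ⟨hpΩ, hpW⟩, mem_image_of_mem Φ hpW⟩, h.left_inv p hpW⟩

end IsC1Chart

namespace IsC1Chart

lemma hasDim_paraCone_of_image_eq_gphOn {X E₁ E₂ : Type*} [NormedAddCommGroup X]
    [NormedSpace ℝ X] [NormedAddCommGroup E₁] [NormedSpace ℝ E₁] [NormedAddCommGroup E₂]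
    [NormedSpace ℝ E₂] [ProperSpace E₂] {U : Set E₁} {f : E₁ → E₂} {K : ℝ≥0} {Ω W : Set X}
    {Φ : X → E₁ × E₂} {Ψ : E₁ × E₂ → X} {z : X} (hchart : IsC1Chart W Φ Ψ) (hzW : z ∈ W)
    (hz : z ∈ Ω) (hU : IsOpen U) (hf : LipschitzOnWith K f U)
    (hgraph : Φ '' (Ω ∩ W) = gphOn f U) (hlin : IsLinearSubspace (paraCone Ω z)) :
    HasDim (paraCone Ω z) (Module.finrank ℝ E₁) := by
  obtain ⟨S, hS⟩ := hlin
  have hΦz : Φ z ∈ gphOn f U := hgraph ▸ mem_image_of_mem Φ ⟨hz, hzW⟩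
  have hCB : ∀ v, fderiv ℝ Ψ (Φ z) (fderiv ℝ Φ z v) = v :=
    DFunLike.congr_fun (hchart.fderiv_inv_comp_fderiv hzW)
  have hBC : ∀ p, fderiv ℝ Φ z (fderiv ℝ Ψ (Φ z) p) = p :=
    DFunLike.congr_fun (hchart.fderiv_comp_fderiv_inv hzW)
  refine ⟨S, hS, finrank_eq_of_injOn_of_surjective
    ((ContinuousLinearMap.fst ℝ E₁ E₂).comp (fderiv ℝ Φ z) : X →ₗ[ℝ] E₁) ?_ ?_⟩
  · intro v hv hv0
    have hBv := hchart.fderiv_mem_paraCone hzW (hS ▸ hv : v ∈ paraCone Ω z)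
    rw [hgraph] at hBv
    have hsnd := norm_snd_le_of_mem_paraCone_gphOn hf hBv
    have hv0 : (fderiv ℝ Φ z v).1 = 0 := hv0
    rw [hv0, norm_zero, mul_zero, norm_le_zero_iff] at hsnd
    rw [← hCB v, (Prod.ext hv0 hsnd : fderiv ℝ Φ z v = 0), map_zero]
  · intro u
    obtain ⟨w, -, hw⟩ := exists_mem_tanCone_gphOn hU hf hΦz.1 u
    rw [show ((Φ z).1, f (Φ z).1) = Φ z from Prod.ext rfl hΦz.2.symm] at hw
    have hp : (u, w) ∈ paraCone (Φ '' (Ω ∩ W)) (Φ z) :=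
      hgraph ▸ tanCone_subset_paraCone hΦz hw
    exact ⟨_, hS ▸ hchart.fderiv_inv_mem_paraCone hzW hp, by simp [hBC]⟩

lemma hasDim_limNormal_of_image_eq_gphOn {E E₁ E₂ : Type*} [NormedAddCommGroup E]
    [InnerProductSpace ℝ E] [CompleteSpace E] [NormedAddCommGroup E₁] [InnerProductSpace ℝ E₁]
    [FiniteDimensional ℝ E₁] [MeasurableSpace E₁] [BorelSpace E₁] [NormedAddCommGroup E₂]
    [InnerProductSpace ℝ E₂] [FiniteDimensional ℝ E₂] {U : Set E₁} {f : E₁ → E₂} {K : ℝ≥0}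
    {Ω W : Set E} {Φ : E → WithLp 2 (E₁ × E₂)} {Ψ : WithLp 2 (E₁ × E₂) → E} {z : E}
    (hchart : IsC1Chart W Φ Ψ) (hzW : z ∈ W) (hz : z ∈ Ω) (hU : IsOpen U)
    (hf : LipschitzOnWith K f U) (hgraph : Φ '' (Ω ∩ W) = WithLp.toLp 2 '' gphOn f U)
    (hlin : IsLinearSubspace (limNormal Ω z)) :
    HasDim (limNormal Ω z) (Module.finrank ℝ E₂) := by
  obtain ⟨S, hS⟩ := hlin
  have hΦz : Φ z ∈ WithLp.toLp 2 '' gphOn f U := hgraph ▸ mem_image_of_mem Φ ⟨hz, hzW⟩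
  obtain ⟨⟨x, y⟩, ⟨hx, hy : y = f x⟩, hΦz⟩ := hΦz
  subst hy
  refine ⟨S, hS, finrank_eq_of_injOn_of_surjective ((WithLp.sndL 2 ℝ E₁ E₂).comp
    (ContinuousLinearMap.adjoint (fderiv ℝ Ψ (Φ z))) : E →ₗ[ℝ] E₂) ?_ ?_⟩
  · intro v hv hv0
    have hCv := hchart.adjoint_fderiv_inv_mem_limNormal hzW (hS ▸ hv : v ∈ limNormal Ω z)
    rw [hgraph] at hCv
    have hfst := norm_fst_le_of_mem_limNormal_gphOn hU hf hCv
    have hv0 : (ContinuousLinearMap.adjoint (fderiv ℝ Ψ (Φ z)) v).snd = 0 := hv0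
    rw [hv0, norm_zero, mul_zero, norm_le_zero_iff] at hfst
    have hCv0 : ContinuousLinearMap.adjoint (fderiv ℝ Ψ (Φ z)) v = 0 := by
      rw [← norm_eq_zero, WithLp.prod_norm_eq_of_L2, hfst, hv0]
      simp
    rw [← hchart.adjoint_fderiv_adjoint_fderiv_inv hzW v, hCv0, map_zero]
  · intro b
    obtain ⟨a, ha⟩ := exists_mem_limNormal_gphOn hU hf hx b
    rw [hΦz, ← hgraph] at ha
    exact ⟨_, hS ▸ hchart.adjoint_fderiv_mem_limNormal hzW ha,
      by simp [hchart.adjoint_fderiv_inv_adjoint_fderiv hzW]⟩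

end IsC1Chart

theorem stmt_7_general {n d : ℕ} (Ω : Set (Euc n)) (zb : Euc n) (hz : zb ∈ Ω)
    (hman : IsLipschitzManifoldAt Ω d (n - d) zb) :
    (IsLinearSubspace (paraCone Ω zb) → HasDim (paraCone Ω zb) d) ∧
    (IsLinearSubspace (limNormal Ω zb) → HasDim (limNormal Ω zb) (n - d)) := by
  obtain ⟨W, Φ, Ψ, U, f, K, hW, hzW, hΦW, hΦ, hΨ, hΨΦ, hΦΨ, hU, hf, hgraph⟩ := hman
  have hchart : IsC1Chart W Φ Ψ := ⟨hW, hΦW, hΦ, hΨ, hΨΦ, hΦΨ⟩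
  -- `Euc d × Euc (n - d)` has the sup norm and no inner product, so for the normal cones the
  -- chart is composed with the passage to `WithLp 2`.
  set e := (WithLp.prodContinuousLinearEquiv 2 ℝ (Euc d) (Euc (n - d))).symm
  have hgraph₂ : (e ∘ Φ) '' (Ω ∩ W) = WithLp.toLp 2 '' gphOn f U := by
    rw [image_comp, hgraph]
    rfl
  constructor
  · intro hlin
    simpa using hchart.hasDim_paraCone_of_image_eq_gphOn hzW hz hU hf hgraph hlin
  · intro hlin
    simpa using (hchart.comp_continuousLinearEquiv e).hasDim_limNormal_of_image_eq_gphOn hzW hz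
      hU hf hgraph₂ hlin

/-- Lemma 2.13: on a `d`-dimensional Lipschitz manifold, the paratingent
cone, if a subspace, has dimension `d`, and the limiting normal cone, if a subspace,
has dimension `n - d`. -/
theorem stmt_7 {n d : ℕ} (hdn : d ≤ n) (Ω : Set (Euc n)) (zb : Euc n) (hz : zb ∈ Ω)
    (hman : IsLipschitzManifoldAt Ω d (n - d) zb) :
    (IsLinearSubspace (paraCone Ω zb) → HasDim (paraCone Ω zb) d) ∧
    (IsLinearSubspace (limNormal Ω zb) → HasDim (limNormal Ω zb) (n - d)) :=
  stmt_7_general Ω zb hz hman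
end
end

section
/- Let U ⊆ ℝⁿ be open and convex, let e: U → ℝ be continuously differentiable, and let ū ∈ U. Assume ∇e is semidifferentiable at ū, i.e., for every h ∈ ℝⁿ the limit d(h) := lim_{h' → h, t ↓ 0} (∇e(ū + t h') − ∇e(ū))/t exists. Then lim_{u → ū, u ≠ ū} (e(u) − e(ū) − ½⟨∇e(u) + ∇e(ū), u − ū⟩)/‖u − ū‖² = 0. -/
open Filter Topology Metric Set
open scoped RealInnerProductSpace NNReal ENNReal

noncomputable section

/-!
Write `u = ū + τ • w` with `‖w‖ = 1`. The fundamental theorem of calculus along the segment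
turns the quotient into `∫₀¹ ⟪q τ w t - ½ q τ w 1, w⟫ dt` with
`q τ w s = τ⁻¹ • (∇e (ū + s • τ • w) - ∇e ū)`. Along sequences `τ ↓ 0`, `w → w₀`,
semidifferentiability gives `q τ w s → s • d(w₀)`, and the calmness of `∇e` that it implies
bounds `q` uniformly, so by dominated convergence the integral tends to
`∫₀¹ (t - ½) ⟪d(w₀), w₀⟫ dt = 0`. Compactness of the unit sphere reduces the limit to such
sequences.
-/

open MeasureTheory
open scoped Interval

section Semidifferentiable

variable {E F : Type*} [NormedAddCommGroup E] [NormedSpace ℝ E]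
  [NormedAddCommGroup F] [NormedSpace ℝ F] {g : E → F} {x h : E} {d : F}

def HasSemiderivAt (g : E → F) (x h : E) (d : F) : Prop :=
  ∀ (hk : ℕ → E) (tk : ℕ → ℝ), Tendsto hk atTop (𝓝 h) → (∀ k, 0 < tk k) →
    Tendsto tk atTop (𝓝 0) →
    Tendsto (fun k => (tk k)⁻¹ • (g (x + tk k • hk k) - g x)) atTop (𝓝 d)

def SemidifferentiableAt (g : E → F) (x : E) : Prop :=
  ∀ h, ∃ d, HasSemiderivAt g x h d

theorem HasSemiderivAt.tendsto_smul {hk : ℕ → E} {τ : ℕ → ℝ} (hd : HasSemiderivAt g x h d)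
    (hh : Tendsto hk atTop (𝓝 h)) (hτ : ∀ k, 0 < τ k) (hτ0 : Tendsto τ atTop (𝓝 0))
    {t : ℝ} (ht : 0 < t) :
    Tendsto (fun k => (τ k)⁻¹ • (g (x + t • τ k • hk k) - g x)) atTop (𝓝 (t • d)) := by
  have hlim := (hd hk (fun k => t * τ k) hh (fun k => mul_pos ht (hτ k))
    (by simpa using hτ0.const_mul t)).const_smul t
  refine hlim.congr fun k => ?_
  have : t * (t * τ k)⁻¹ = (τ k)⁻¹ := by field_simp [ht.ne']
  simp only [smul_smul, this]

theorem exists_subseq_eq_smul_of_tendsto_zero [ProperSpace E] {v : ℕ → E} (hv0 : ∀ k, v k ≠ 0)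
    (hv : Tendsto v atTop (𝓝 0)) :
    ∃ φ : ℕ → ℕ, StrictMono φ ∧ ∃ (τ : ℕ → ℝ) (w : ℕ → E) (w₀ : E), (∀ k, 0 < τ k) ∧
      Tendsto τ atTop (𝓝 0) ∧ (∀ k, ‖w k‖ = 1) ∧ Tendsto w atTop (𝓝 w₀) ∧
      ∀ k, τ k • w k = v (φ k) := by
  have hsphere : ∀ k, ‖v k‖⁻¹ • v k ∈ sphere (0 : E) 1 := fun k => by
    simpa using norm_smul_inv_norm (𝕜 := ℝ) (hv0 k)
  obtain ⟨w₀, -, φ, hφ, hw⟩ := (isCompact_sphere (0 : E) 1).tendsto_subseq hsphere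
  refine ⟨φ, hφ, fun k => ‖v (φ k)‖, fun k => ‖v (φ k)‖⁻¹ • v (φ k), w₀,
    fun k => norm_pos_iff.2 (hv0 _), ?_, fun k => by simpa using hsphere (φ k), hw,
    fun k => smul_inv_smul₀ (norm_ne_zero_iff.2 (hv0 _)) _⟩
  simpa using (hv.comp hφ.tendsto_atTop).norm

theorem SemidifferentiableAt.isBigO_sub [ProperSpace E] (hg : SemidifferentiableAt g x) :
    (fun v => g (x + v) - g x) =O[𝓝 0] id := by
  rw [Asymptotics.isBigO_iff]
  by_contra! hcon
  have hex : ∀ k : ℕ, ∃ v : E, ‖v‖ < 1 / (k + 1) ∧ (k + 1) * ‖v‖ < ‖g (x + v) - g x‖ :=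
    fun k => ((hcon (k + 1)).and_eventually
      (ball_mem_nhds (0 : E) Nat.one_div_pos_of_nat)).exists.imp
        fun v hv => ⟨by simpa using hv.2, hv.1⟩
  choose v hvsmall hvlarge using hex
  have hv0 : ∀ k, v k ≠ 0 := by
    intro k hk
    simpa [hk] using hvlarge k
  have hv : Tendsto v atTop (𝓝 0) :=
    squeeze_zero_norm (fun k => (hvsmall k).le) tendsto_one_div_add_atTop_nhds_zero_nat
  obtain ⟨φ, hφ, τ, w, w₀, hτ, hτ0, hw1, hw, hvφ⟩ := exists_subseq_eq_smul_of_tendsto_zero hv0 hv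
  obtain ⟨d, hd⟩ := hg w₀
  have hquot := (hd w τ hw hτ hτ0).norm
  have hnorm : ∀ k, ‖v (φ k)‖ = τ k := fun k => by
    rw [← hvφ, norm_smul, hw1, mul_one, Real.norm_of_nonneg (hτ k).le]
  have hlarge : ∀ k : ℕ, (k + 1 : ℝ) ≤ ‖(τ k)⁻¹ • (g (x + τ k • w k) - g x)‖ := fun k => by
    rw [norm_smul, norm_inv, Real.norm_of_nonneg (hτ k).le, hvφ, ← div_eq_inv_mul,
      le_div_iff₀ (hτ k), ← hnorm]
    calc (k + 1 : ℝ) * ‖v (φ k)‖ ≤ (φ k + 1) * ‖v (φ k)‖ := by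
          gcongr; exact_mod_cast hφ.le_apply
      _ ≤ ‖g (x + v (φ k)) - g x‖ := (hvlarge _).le
  exact not_tendsto_atTop_of_tendsto_nhds hquot <| tendsto_atTop_mono hlarge <|
    tendsto_atTop_add_const_right _ 1 tendsto_natCast_atTop_atTop

theorem SemidifferentiableAt.eventually_norm_smul_sub_le [ProperSpace E]
    (hg : SemidifferentiableAt g x) {τ : ℕ → ℝ} {w : ℕ → E} (hτ : ∀ k, 0 < τ k)
    (hτ0 : Tendsto τ atTop (𝓝 0)) (hw1 : ∀ k, ‖w k‖ ≤ 1) :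
    ∃ c, ∀ᶠ k in atTop, ∀ s ∈ Icc (0 : ℝ) 1, ‖(τ k)⁻¹ • (g (x + s • τ k • w k) - g x)‖ ≤ c := by
  obtain ⟨c, hc0, hc⟩ := hg.isBigO_sub.exists_pos
  obtain ⟨δ, hδ, hcδ⟩ := Metric.eventually_nhds_iff.1 hc.bound
  refine ⟨c, ?_⟩
  filter_upwards [hτ0.eventually (gt_mem_nhds hδ)] with k hk s hs
  have hnorm : ‖s • τ k • w k‖ ≤ τ k := by
    rw [norm_smul, norm_smul, Real.norm_of_nonneg hs.1, Real.norm_of_nonneg (hτ k).le]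
    have := (hτ k).le
    calc s * (τ k * ‖w k‖) ≤ 1 * (τ k * 1) := by gcongr; exacts [hs.2, hw1 k]
      _ = τ k := by ring
  have hsmall : ‖g (x + s • τ k • w k) - g x‖ ≤ c * ‖s • τ k • w k‖ :=
    hcδ (by rw [dist_zero_right]; exact hnorm.trans_lt hk)
  rw [norm_smul, norm_inv, Real.norm_of_nonneg (hτ k).le, inv_mul_le_iff₀ (hτ k)]
  calc ‖g (x + s • τ k • w k) - g x‖ ≤ c * ‖s • τ k • w k‖ := hsmall
    _ ≤ τ k * c := by rw [mul_comm]; gcongr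

end Semidifferentiable

theorem tendsto_nhdsWithin_diff_of_directions {E β : Type*} [NormedAddCommGroup E]
    [NormedSpace ℝ E] [ProperSpace E] {f : E → β} {l : Filter β} {s : Set E} {x : E}
    (h : ∀ (τ : ℕ → ℝ) (w : ℕ → E) (w₀ : E), (∀ k, 0 < τ k) → Tendsto τ atTop (𝓝 0) →
      (∀ k, ‖w k‖ = 1) → Tendsto w atTop (𝓝 w₀) → (∀ k, x + τ k • w k ∈ s) →
      Tendsto (fun k => f (x + τ k • w k)) atTop l) :
    Tendsto f (𝓝[s \ {x}] x) l := by
  refine tendsto_of_subseq_tendsto fun u hu => ?_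
  obtain ⟨hux, hus⟩ := tendsto_nhdsWithin_iff.1 hu
  obtain ⟨φ, hφ, hφs⟩ := extraction_of_eventually_atTop hus
  obtain ⟨ψ, hψ, τ, w, w₀, hτ, hτ0, hw1, hw, hτw⟩ :=
    exists_subseq_eq_smul_of_tendsto_zero (v := fun k => u (φ k) - x)
      (fun k => sub_ne_zero.2 (hφs k).2)
      (by simpa using (hux.comp hφ.tendsto_atTop).sub_const x)
  have hu_eq : ∀ k, x + τ k • w k = u (φ (ψ k)) := fun k => by
    rw [hτw, add_sub_cancel]
  exact ⟨φ ∘ ψ, (h τ w w₀ hτ hτ0 hw1 hw fun k => hu_eq k ▸ (hφs _).1).congr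
    fun k => congrArg f (hu_eq k)⟩

section Trapezoid

variable {E : Type*} [NormedAddCommGroup E] [InnerProductSpace ℝ E]
  {U : Set E} {e : E → ℝ} {g : E → E} {x v : E}

theorem integral_inner_gradient_sub [CompleteSpace E] (hconv : Convex ℝ U) (hx : x ∈ U)
    (hxv : x + v ∈ U) (hgrad : ∀ u ∈ U, HasGradientAt e (g u) u) (hcont : ContinuousOn g U)
    (a : E) :
    ∫ t in (0 : ℝ)..1, ⟪g (x + t • v) - a, v⟫ = e (x + v) - e x - ⟪a, v⟫ := by
  have hseg : ∀ t ∈ uIcc (0 : ℝ) 1, x + t • v ∈ U := fun t ht =>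
    hconv.add_smul_mem hx hxv (by rwa [uIcc_of_le zero_le_one] at ht)
  have hderiv : ∀ t ∈ uIcc (0 : ℝ) 1, HasDerivAt (fun t : ℝ => e (x + t • v) - t * ⟪a, v⟫)
      ⟪g (x + t • v) - a, v⟫ t := fun t ht => by
    have hpath : HasDerivAt (fun t : ℝ => x + t • v) v t := by
      simpa using ((hasDerivAt_id t).smul_const v).const_add x
    rw [inner_sub_left]
    refine HasDerivAt.sub ?_ (by simpa using (hasDerivAt_id t).mul_const ⟪a, v⟫)
    simpa [Function.comp_def] using (hgrad _ (hseg t ht)).hasFDerivAt.comp_hasDerivAt t hpath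
  have hint : IntervalIntegrable (fun t : ℝ => ⟪g (x + t • v) - a, v⟫) volume 0 1 :=
    ((hcont.comp (by fun_prop) hseg).sub continuousOn_const).inner continuousOn_const
      |>.intervalIntegrable
  rw [intervalIntegral.integral_eq_sub_of_hasDerivAt hderiv hint]
  simp only [one_smul, one_mul, zero_smul, add_zero, zero_mul, sub_zero]
  ring

theorem trapezoid_error_eq_integral [CompleteSpace E] (hconv : Convex ℝ U) (hx : x ∈ U)
    (hxv : x + v ∈ U) (hgrad : ∀ u ∈ U, HasGradientAt e (g u) u) (hcont : ContinuousOn g U) :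
    e (x + v) - e x - 1 / 2 * ⟪g (x + v) + g x, v⟫ =
      ∫ t in (0 : ℝ)..1, ⟪g (x + t • v) - g x - (1 / 2 : ℝ) • (g (x + v) - g x), v⟫ := by
  simp only [sub_sub]
  rw [integral_inner_gradient_sub hconv hx hxv hgrad hcont]
  simp only [inner_add_left, inner_smul_left, inner_sub_left, RCLike.conj_to_real]
  ring

theorem trapezoid_error_smul_div_sq_eq_integral [CompleteSpace E] (hconv : Convex ℝ U)
    (hx : x ∈ U) (hgrad : ∀ u ∈ U, HasGradientAt e (g u) u) (hcont : ContinuousOn g U)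
    {τ : ℝ} (hτ : τ ≠ 0) {w : E} (hxw : x + τ • w ∈ U) :
    (e (x + τ • w) - e x - 1 / 2 * ⟪g (x + τ • w) + g x, τ • w⟫) / τ ^ 2 =
      ∫ t in (0 : ℝ)..1, ⟪τ⁻¹ • (g (x + t • τ • w) - g x)
        - (1 / 2 : ℝ) • τ⁻¹ • (g (x + τ • w) - g x), w⟫ := by
  rw [trapezoid_error_eq_integral hconv hx hxw hgrad hcont, ← intervalIntegral.integral_div]
  refine intervalIntegral.integral_congr fun t _ => ?_
  simp only [inner_sub_left, inner_smul_left, inner_smul_right, RCLike.conj_to_real]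
  field_simp

theorem tendsto_trapezoid_error_div_sq [ProperSpace E] (hconv : Convex ℝ U) (hx : x ∈ U)
    (hgrad : ∀ u ∈ U, HasGradientAt e (g u) u) (hcont : ContinuousOn g U)
    (hg : SemidifferentiableAt g x) {τ : ℕ → ℝ} {w : ℕ → E} {w₀ : E}
    (hτ : ∀ k, 0 < τ k) (hτ0 : Tendsto τ atTop (𝓝 0)) (hw1 : ∀ k, ‖w k‖ = 1)
    (hw : Tendsto w atTop (𝓝 w₀)) (hxU : ∀ k, x + τ k • w k ∈ U) :
    Tendsto (fun k => (e (x + τ k • w k) - e x - 1 / 2 * ⟪g (x + τ k • w k) + g x, τ k • w k⟫)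
      / τ k ^ 2) atTop (𝓝 0) := by
  set q : ℕ → ℝ → E := fun k s => (τ k)⁻¹ • (g (x + s • τ k • w k) - g x)
  set F : ℕ → ℝ → ℝ := fun k t => ⟪q k t - (1 / 2 : ℝ) • q k 1, w k⟫
  have hrepr : ∀ k, (e (x + τ k • w k) - e x - 1 / 2 * ⟪g (x + τ k • w k) + g x, τ k • w k⟫)
      / τ k ^ 2 = ∫ t in (0 : ℝ)..1, F k t := fun k => by
    simpa only [F, q, one_smul] using
      trapezoid_error_smul_div_sq_eq_integral hconv hx hgrad hcont (hτ k).ne' (hxU k)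
  have hI : Ι (0 : ℝ) 1 = Ioc 0 1 := uIoc_of_le zero_le_one
  obtain ⟨d, hd⟩ := hg w₀
  have hlim : ∀ t ∈ Ι (0 : ℝ) 1, Tendsto (fun k => F k t) atTop (𝓝 ((t - 1 / 2) * ⟪d, w₀⟫)) := by
    intro t ht
    rw [hI] at ht
    have := ((hd.tendsto_smul hw hτ hτ0 ht.1).sub
      ((hd.tendsto_smul hw hτ hτ0 one_pos).const_smul (1 / 2 : ℝ))).inner (𝕜 := ℝ) hw
    convert this using 2
    simp only [inner_sub_left, inner_smul_left, one_smul, RCLike.conj_to_real]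
    ring
  obtain ⟨c, hc⟩ := hg.eventually_norm_smul_sub_le hτ hτ0 fun k => (hw1 k).le
  have hFbound : ∀ᶠ k in atTop, ∀ t ∈ Ι (0 : ℝ) 1, ‖F k t‖ ≤ 3 / 2 * c := by
    filter_upwards [hc] with k hk t ht
    rw [hI] at ht
    calc ‖F k t‖ ≤ ‖q k t - (1 / 2 : ℝ) • q k 1‖ * ‖w k‖ := norm_inner_le_norm _ _
      _ ≤ ‖q k t‖ + ‖(1 / 2 : ℝ) • q k 1‖ := by rw [hw1, mul_one]; exact norm_sub_le _ _
      _ ≤ c + 1 / 2 * c := by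
          rw [norm_smul (1 / 2 : ℝ) (q k 1), Real.norm_of_nonneg (by norm_num)]
          gcongr
          · exact hk t (Ioc_subset_Icc_self ht)
          · exact hk 1 (right_mem_Icc.2 zero_le_one)
      _ = 3 / 2 * c := by ring
  have hFcont : ∀ k, ContinuousOn (F k) (Icc 0 1) := fun k =>
    (((hcont.comp (by fun_prop) fun s hs => by
      simpa only [smul_smul] using hconv.add_smul_mem hx (hxU k) hs).sub
      continuousOn_const).const_smul _ |>.sub continuousOn_const).inner continuousOn_const
  have hDCT := intervalIntegral.tendsto_integral_filter_of_dominated_convergence (μ := volume)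
    (fun _ => 3 / 2 * c)
    (.of_forall fun k => hI ▸ ((hFcont k).mono Ioc_subset_Icc_self).aestronglyMeasurable
      measurableSet_Ioc)
    (hFbound.mono fun k hk => .of_forall hk) intervalIntegrable_const (.of_forall hlim)
  have hzero : ∫ t in (0 : ℝ)..1, (t - 1 / 2) * ⟪d, w₀⟫ = 0 := by
    simp [intervalIntegral.integral_mul_const,
      intervalIntegral.integral_sub intervalIntegral.intervalIntegrable_id intervalIntegrable_const]
  rw [hzero] at hDCT
  exact hDCT.congr fun k => (hrepr k).symm

end Trapezoid

theorem stmt_18_general {n : ℕ} (U : Set (Euc n)) (hconv : Convex ℝ U)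
    (e : Euc n → ℝ) (g : Euc n → Euc n) (ub : Euc n) (hu : ub ∈ U)
    (hgrad : ∀ u ∈ U, HasGradientAt e (g u) u) (hcont : ContinuousOn g U)
    (hsemi : ∀ h : Euc n, ∃ d : Euc n, ∀ (hk : ℕ → Euc n) (tk : ℕ → ℝ),
      Tendsto hk atTop (𝓝 h) → (∀ k, 0 < tk k) → Tendsto tk atTop (𝓝 0) →
      Tendsto (fun k => (tk k)⁻¹ • (g (ub + tk k • hk k) - g ub)) atTop (𝓝 d)) :
    Tendsto (fun u => (e u - e ub - (1 / 2) * ⟪g u + g ub, u - ub⟫) / ‖u - ub‖ ^ 2)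
      (𝓝[U \ {ub}] ub) (𝓝 0) := by
  refine tendsto_nhdsWithin_diff_of_directions fun τ w w₀ hτ hτ0 hw1 hw hU => ?_
  have hnorm : ∀ k, ‖τ k • w k‖ = τ k := fun k => by
    rw [norm_smul, hw1, mul_one, Real.norm_of_nonneg (hτ k).le]
  simpa only [add_sub_cancel_left, hnorm] using
    tendsto_trapezoid_error_div_sq hconv hu hgrad hcont hsemi hτ hτ0 hw1 hw hU

/-- the trapezoidal rule for a `C¹` function whose gradient is
semidifferentiable at `ub`. -/
theorem stmt_18 {n : ℕ} (U : Set (Euc n)) (hU : IsOpen U) (hconv : Convex ℝ U)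
    (e : Euc n → ℝ) (g : Euc n → Euc n) (ub : Euc n) (hu : ub ∈ U)
    (hgrad : ∀ u ∈ U, HasGradientAt e (g u) u) (hcont : ContinuousOn g U)
    (hsemi : ∀ h : Euc n, ∃ d : Euc n, ∀ (hk : ℕ → Euc n) (tk : ℕ → ℝ),
      Tendsto hk atTop (𝓝 h) → (∀ k, 0 < tk k) → Tendsto tk atTop (𝓝 0) →
      Tendsto (fun k => (tk k)⁻¹ • (g (ub + tk k • hk k) - g ub)) atTop (𝓝 d)) :
    Tendsto (fun u => (e u - e ub - (1 / 2) * ⟪g u + g ub, u - ub⟫) / ‖u - ub‖ ^ 2)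
      (𝓝[U \ {ub}] ub) (𝓝 0) :=
  stmt_18_general U hconv e g ub hu hgrad hcont hsemi
end
end

section
/- Let U ⊆ ℝⁿ be open and convex, let e: U → ℝ be continuously differentiable, and let ū ∈ U. Assume ∇e is strictly differentiable at ū, i.e., there is a symmetric n×n matrix H with (∇e(u') − ∇e(u) − H(u' − u))/‖u' − u‖ → 0 as u, u' → ū with u ≠ u'. Then lim_{u, u' → ū, u ≠ u'} (e(u') − e(u) − ½⟨∇e(u') + ∇e(u), u' − u⟩)/‖u' − u‖² = 0. -/
open Filter Topology Metric Set
open scoped RealInnerProductSpace NNReal ENNReal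

noncomputable section

/-!
Along the segment `t ↦ u + t (u' - u)` the trapezoidal error is `ψ 1 - ψ 0` for
`ψ t = e (u + t v) - t ⟪g u, v⟫ - t² / 2 ⟪g u' - g u, v⟫`, `v = u' - u`, whose derivative is
`⟪g (u + t v) - ((1 - t) g u + t g u'), v⟫`. Strict differentiability of `g` at `ub`, applied
with the linear map `H` to the pairs `(u, u + t v)` and `(u, u')`, makes `g` deviate from its
linear interpolation by at most `ε ‖v‖` near `ub`, and the mean value inequality gives the
bound `ε ‖v‖²`.
-/

section Trapezoid

open AffineMap

theorem norm_sub_lineMap_le_of_approx_linear {E F : Type*}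
    [NormedAddCommGroup E] [NormedSpace ℝ E] [NormedAddCommGroup F] [NormedSpace ℝ F]
    {g : E → F} {A : E →L[ℝ] F} {s : Set E} (hs : Convex ℝ s) {η : ℝ} (hη : 0 ≤ η)
    (hg : ∀ x ∈ s, ∀ y ∈ s, ‖g y - g x - A (y - x)‖ ≤ η * ‖y - x‖)
    {u u' : E} (hu : u ∈ s) (hu' : u' ∈ s) {t : ℝ} (ht : t ∈ Icc (0 : ℝ) 1) :
    ‖g (lineMap u u' t) - lineMap (g u) (g u') t‖ ≤ 2 * η * ‖u' - u‖ := by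
  have hL : lineMap u u' t - u = t • (u' - u) := lineMap_vsub_left u u' t
  have hsplit : g (lineMap u u' t) - lineMap (g u) (g u') t =
      (g (lineMap u u' t) - g u - A (t • (u' - u))) - t • (g u' - g u - A (u' - u)) := by
    rw [map_smul, lineMap_apply_module' (g u)]
    module
  have hnear := hg u hu _ (hs.lineMap_mem hu hu' ht)
  have hfar := hg u hu u' hu'
  rw [hL, norm_smul, Real.norm_of_nonneg ht.1] at hnear
  calc ‖g (lineMap u u' t) - lineMap (g u) (g u') t‖
      ≤ η * (t * ‖u' - u‖) + t * (η * ‖u' - u‖) := by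
        rw [hsplit]
        refine (norm_sub_le _ _).trans (add_le_add hnear ?_)
        rw [norm_smul, Real.norm_of_nonneg ht.1]
        exact mul_le_mul_of_nonneg_left hfar ht.1
    _ = t * (2 * η * ‖u' - u‖) := by ring
    _ ≤ 2 * η * ‖u' - u‖ := mul_le_of_le_one_left (by positivity) ht.2

theorem abs_trapezoid_error_le {E : Type*} [NormedAddCommGroup E] [InnerProductSpace ℝ E]
    [CompleteSpace E] {e : E → ℝ} {g : E → E} {u u' : E} {C : ℝ}
    (hgrad : ∀ x ∈ segment ℝ u u', HasGradientAt e (g x) x)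
    (hdev : ∀ t ∈ Ico (0 : ℝ) 1, ‖g (lineMap u u' t) - lineMap (g u) (g u') t‖ ≤ C) :
    |e u' - e u - 1 / 2 * ⟪g u' + g u, u' - u⟫| ≤ C * ‖u' - u‖ := by
  set ψ : ℝ → ℝ := fun t =>
    e (lineMap u u' t) - t * ⟪g u, u' - u⟫ - t ^ 2 / 2 * ⟪g u' - g u, u' - u⟫
  have hψ : ∀ t ∈ Icc (0 : ℝ) 1, HasDerivWithinAt ψ
      ⟪g (lineMap u u' t) - lineMap (g u) (g u') t, u' - u⟫ (Icc 0 1) t := by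
    intro t ht
    have he := (hgrad _ (lineMap_mem_segment ℝ u u' ht)).hasFDerivAt.comp_hasDerivAt t
      hasDerivAt_lineMap
    refine (((he.sub ((hasDerivAt_id t).mul_const ⟪g u, u' - u⟫)).sub
      (((hasDerivAt_pow 2 t).div_const 2).mul_const ⟪g u' - g u, u' - u⟫)).hasDerivWithinAt
      ).congr_deriv ?_
    simp only [InnerProductSpace.toDual_apply_apply, lineMap_apply_module', inner_sub_left,
      inner_add_left, real_inner_smul_left]
    ring
  have hbound : ∀ t ∈ Ico (0 : ℝ) 1,
      ‖⟪g (lineMap u u' t) - lineMap (g u) (g u') t, u' - u⟫‖ ≤ C * ‖u' - u‖ := fun t ht =>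
    (norm_inner_le_norm _ _).trans (mul_le_mul_of_nonneg_right (hdev t ht) (norm_nonneg _))
  have := norm_image_sub_le_of_norm_deriv_le_segment_01' hψ hbound
  rw [Real.norm_eq_abs] at this
  convert this using 2
  simp only [ψ, lineMap_apply_one, lineMap_apply_zero, inner_add_left, inner_sub_left]
  ring

end Trapezoid

theorem stmt_19_general {n : ℕ} (U : Set (Euc n)) (hconv : Convex ℝ U)
    (e : Euc n → ℝ) (g : Euc n → Euc n) (ub : Euc n)
    (hgrad : ∀ u ∈ U, HasGradientAt e (g u) u)
    (H : Euc n →L[ℝ] Euc n)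
    (hstrict : ∀ ε : ℝ, 0 < ε → ∃ δ > 0, ∀ u ∈ U, ∀ u' ∈ U,
      ‖u - ub‖ < δ → ‖u' - ub‖ < δ → ‖g u' - g u - H (u' - u)‖ ≤ ε * ‖u' - u‖) :
    ∀ ε : ℝ, 0 < ε → ∃ δ > 0, ∀ u ∈ U, ∀ u' ∈ U,
      ‖u - ub‖ < δ → ‖u' - ub‖ < δ → u ≠ u' →
      |e u' - e u - (1 / 2) * ⟪g u' + g u, u' - u⟫| ≤ ε * ‖u' - u‖ ^ 2 := by
  intro ε hε
  obtain ⟨δ, hδ, hδH⟩ := hstrict (ε / 2) (half_pos hε)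
  refine ⟨δ, hδ, fun u hu u' hu' hud hu'd _ => ?_⟩
  have hs : Convex ℝ (U ∩ ball ub δ) := hconv.inter (convex_ball ub δ)
  have hH : ∀ x ∈ U ∩ ball ub δ, ∀ y ∈ U ∩ ball ub δ,
      ‖g y - g x - H (y - x)‖ ≤ ε / 2 * ‖y - x‖ := fun x hx y hy =>
    hδH x hx.1 y hy.1 (mem_ball_iff_norm.1 hx.2) (mem_ball_iff_norm.1 hy.2)
  calc |e u' - e u - 1 / 2 * ⟪g u' + g u, u' - u⟫|
      ≤ 2 * (ε / 2) * ‖u' - u‖ * ‖u' - u‖ :=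
        abs_trapezoid_error_le (fun x hx => hgrad x (hconv.segment_subset hu hu' hx))
          fun t ht => norm_sub_lineMap_le_of_approx_linear hs (half_pos hε).le hH
            ⟨hu, mem_ball_iff_norm.2 hud⟩
            ⟨hu', mem_ball_iff_norm.2 hu'd⟩ (Ico_subset_Icc_self ht)
    _ = ε * ‖u' - u‖ ^ 2 := by ring

/-- the two-point trapezoidal rule for a `C¹` function whose gradient is
strictly differentiable at `ub`. -/
theorem stmt_19 {n : ℕ} (U : Set (Euc n)) (hU : IsOpen U) (hconv : Convex ℝ U)
    (e : Euc n → ℝ) (g : Euc n → Euc n) (ub : Euc n) (hu : ub ∈ U)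
    (hgrad : ∀ u ∈ U, HasGradientAt e (g u) u) (hcont : ContinuousOn g U)
    (H : Euc n →L[ℝ] Euc n) (hsym : ∀ u v : Euc n, ⟪H u, v⟫ = ⟪u, H v⟫)
    (hstrict : ∀ ε : ℝ, 0 < ε → ∃ δ > 0, ∀ u ∈ U, ∀ u' ∈ U,
      ‖u - ub‖ < δ → ‖u' - ub‖ < δ → ‖g u' - g u - H (u' - u)‖ ≤ ε * ‖u' - u‖) :
    ∀ ε : ℝ, 0 < ε → ∃ δ > 0, ∀ u ∈ U, ∀ u' ∈ U,
      ‖u - ub‖ < δ → ‖u' - ub‖ < δ → u ≠ u' →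
      |e u' - e u - (1 / 2) * ⟪g u' + g u, u' - u⟫| ≤ ε * ‖u' - u‖ ^ 2 :=
  stmt_19_general U hconv e g ub hgrad H hstrict
end
end
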